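/- arXiv:1609.01170 — 2 statements merged into one kernel-verified Lean document; each statement's English description precedes it below -/
import Mathlib

section
/- Let K be a field of characteristic zero, let k ≥ 1, let μ₁ < μ₂ < ⋯ < μ_k be natural numbers, and let P₁, …, P_k ∈ K[[X]] be formal power series each with constant coefficient 1. Let W be the k × k matrix over K[[X]] with entries W_{i,j} := (d/dX)^{j−1}(X^{μ_i}P_i) for 1 ≤ i, j ≤ k, and set d₀ := (μ₁ + ⋯ + μ_k) − k(k−1)/2. Then the coefficient of X^n in det W vanishes for all n < d₀, and the coefficient of X^{d₀} in det W equals the Vandermonde product ∏_{1≤i<j≤k}(μ_j − μ_i)·1_K, which is nonzero; in particular the order of det W equals d₀. -/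
open PowerSeries Finset

/-! The `(i, j)` entry `(d/dX)^j (X^{μ i} P i)` is divisible by `X^{μ i - j}`, with coefficient of
`X^{μ i - j}` equal to the falling factorial `μ i (μ i - 1) ⋯ (μ i - j + 1)`; this also holds for
`j > μ i`, where both sides vanish. Hence every term of the Leibniz expansion of `det W` is
divisible by `X^{d₀}`, and the coefficients of `X^{d₀}` add up to the determinant of the matrix of
falling factorials `(μ i)_j`. Its columns are monic polynomials of degree `j` evaluated at `μ i`,
so it equals the Vandermonde determinant of the `μ i`. -/

namespace PowerSeries

variable {R : Type*} {ι : Type*}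

section CommSemiring

variable [CommSemiring R]

theorem coeff_sum_prod_of_X_pow_dvd (s : Finset ι) (f : ι → R⟦X⟧) (e : ι → ℕ)
    (hf : ∀ i ∈ s, X ^ e i ∣ f i) :
    coeff (∑ i ∈ s, e i) (∏ i ∈ s, f i) = ∏ i ∈ s, coeff (e i) (f i) := by
  choose! g hg using hf
  have hcoeff : ∀ i ∈ s, coeff (e i) (f i) = constantCoeff (g i) := fun i hi => by
    simpa [hg i hi] using coeff_X_pow_mul (g i) (e i) 0
  rw [prod_congr rfl hg, prod_mul_distrib, prod_pow_eq_pow_sum, prod_congr rfl hcoeff,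
    ← map_prod]
  simpa using coeff_X_pow_mul (∏ i ∈ s, g i) (∑ i ∈ s, e i) 0

theorem coeff_sum_tsub_sum_prod_of_X_pow_tsub_dvd (s : Finset ι) (f : ι → R⟦X⟧) (c d : ι → ℕ)
    (hf : ∀ i ∈ s, X ^ (d i - c i) ∣ f i) (hcd : ∑ i ∈ s, c i ≤ ∑ i ∈ s, d i) :
    coeff (∑ i ∈ s, d i - ∑ i ∈ s, c i) (∏ i ∈ s, f i) =
      ∏ i ∈ s, if c i ≤ d i then coeff (d i - c i) (f i) else 0 := by
  by_cases hle : ∀ i ∈ s, c i ≤ d i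
  · rw [← sum_tsub_distrib s hle, coeff_sum_prod_of_X_pow_dvd s f _ hf]
    exact prod_congr rfl fun i hi => (if_pos (hle i hi)).symm
  · push Not at hle
    obtain ⟨i₀, hi₀, hlt⟩ := hle
    rw [prod_eq_zero (f := fun i => if c i ≤ d i then coeff (d i - c i) (f i) else 0) hi₀
      (if_neg hlt.not_ge)]
    have hdvd : X ^ (∑ i ∈ s, (d i - c i)) ∣ ∏ i ∈ s, f i := by
      rw [← prod_pow_eq_pow_sum]
      exact prod_dvd_prod_of_dvd _ _ hf
    refine X_pow_dvd_iff.mp hdvd _ ?_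
    have : ∑ i ∈ s, d i < ∑ i ∈ s, (d i - c i + c i) :=
      sum_lt_sum (fun i _ => le_tsub_add) ⟨i₀, hi₀, by omega⟩
    rw [sum_add_distrib] at this
    omega

theorem X_pow_sum_tsub_sum_dvd_prod (s : Finset ι) (f : ι → R⟦X⟧) (c d : ι → ℕ)
    (hf : ∀ i ∈ s, X ^ (d i - c i) ∣ f i) :
    X ^ (∑ i ∈ s, d i - ∑ i ∈ s, c i) ∣ ∏ i ∈ s, f i := by
  have hle : ∑ i ∈ s, d i ≤ ∑ i ∈ s, (d i - c i + c i) := sum_le_sum fun i _ => le_tsub_add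
  rw [sum_add_distrib] at hle
  refine (pow_dvd_pow X (by omega : _ ≤ ∑ i ∈ s, (d i - c i))).trans ?_
  rw [← prod_pow_eq_pow_sum]
  exact prod_dvd_prod_of_dvd _ _ hf

theorem X_pow_tsub_dvd_iterate_derivative {f : R⟦X⟧} {m : ℕ} (hf : X ^ m ∣ f) (j : ℕ) :
    X ^ (m - j) ∣ (d⁄dX R)^[j] f := by
  rw [X_pow_dvd_iff] at hf ⊢
  intro n hn
  rw [coeff_iterate_derivative, hf _ (by omega), mul_zero]

theorem coeff_tsub_iterate_derivative_X_pow_mul (p : R⟦X⟧) {m j : ℕ} (h : j ≤ m) :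
    coeff (m - j) ((d⁄dX R)^[j] (X ^ m * p)) = m.descFactorial j * constantCoeff p := by
  rw [coeff_iterate_derivative, ← Nat.add_descFactorial_eq_ascFactorial, Nat.sub_add_cancel h]
  simpa using congrArg (_ * ·) (coeff_X_pow_mul p m 0)

end CommSemiring

variable [CommRing R] [Fintype ι] [DecidableEq ι]

theorem X_pow_sum_tsub_sum_dvd_det (M : Matrix ι ι R⟦X⟧) (a b : ι → ℕ)
    (hM : ∀ i j, X ^ (a i - b j) ∣ M i j) :
    X ^ (∑ i, a i - ∑ j, b j) ∣ M.det := by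
  rw [Matrix.det_apply]
  refine dvd_sum fun σ _ => ?_
  rw [Units.smul_def, zsmul_eq_mul, ← Equiv.sum_comp σ a]
  exact (X_pow_sum_tsub_sum_dvd_prod _ _ b _ fun i _ => hM (σ i) i).mul_left _

theorem coeff_sum_tsub_sum_det_of_X_pow_tsub_dvd (M : Matrix ι ι R⟦X⟧) (a b : ι → ℕ)
    (hM : ∀ i j, X ^ (a i - b j) ∣ M i j) (hab : ∑ j, b j ≤ ∑ i, a i) :
    coeff (∑ i, a i - ∑ j, b j) M.det =
      (Matrix.of fun i j => if b j ≤ a i then coeff (a i - b j) (M i j) else 0).det := by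
  simp only [Matrix.det_apply, map_sum, Units.smul_def, map_zsmul, Matrix.of_apply]
  refine sum_congr rfl fun σ _ => ?_
  rw [← Equiv.sum_comp σ a, coeff_sum_tsub_sum_prod_of_X_pow_tsub_dvd univ (fun i => M (σ i) i) b
    (fun i => a (σ i)) (fun i _ => hM (σ i) i) (by rwa [Equiv.sum_comp σ a])]

end PowerSeries

theorem Fin.val_le_of_strictMono {n : ℕ} {f : Fin n → ℕ} (hf : StrictMono f) (i : Fin n) :
    (i : ℕ) ≤ f i := by
  cases n with
  | zero => exact i.elim0
  | succ n =>
    induction i using Fin.induction with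
    | zero => exact Nat.zero_le _
    | succ i ih =>
      have := hf (Fin.castSucc_lt_succ (i := i))
      simp only [Fin.val_succ, Fin.val_castSucc] at ih ⊢
      omega

theorem Matrix.det_of_descFactorial {R : Type*} [CommRing R] {n : ℕ} (v : Fin n → ℕ) :
    (Matrix.of fun i j : Fin n => ((v i).descFactorial j : R)).det =
      ∏ i : Fin n, ∏ j ∈ Ioi i, ((v j : R) - v i) := by
  have hℤ : (Matrix.of fun i j : Fin n => ((v i).descFactorial j : ℤ)).det =
      ∏ i : Fin n, ∏ j ∈ Ioi i, ((v j : ℤ) - v i) := by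
    rw [← Matrix.det_vandermonde, Matrix.det_eval_matrixOfPolynomials_eq_det_vandermonde _
      (fun j => descPochhammer ℤ j) (fun j => descPochhammer_natDegree ℤ j)
      (fun j => monic_descPochhammer ℤ j)]
    simp [descPochhammer_eval_eq_descFactorial]
  have := congrArg (Int.castRingHom R) hℤ
  rw [RingHom.map_det] at this
  simpa [RingHom.mapMatrix_apply, Matrix.map] using this

theorem stmt8_general {K : Type*} [Field K] [CharZero K] (k : ℕ)
    (μ : Fin k → ℕ) (hμ : StrictMono μ)
    (P : Fin k → PowerSeries K)
    (hP : ∀ i, PowerSeries.constantCoeff (P i) = 1) :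
    ∀ W : Matrix (Fin k) (Fin k) (PowerSeries K),
      (W = fun (i j : Fin k) => (⇑(PowerSeries.derivative K))^[(j : ℕ)] (PowerSeries.X ^ μ i * P i)) →
      ∀ d₀ : ℕ, d₀ = (∑ i, μ i) - k * (k - 1) / 2 →
      (∀ n : ℕ, n < d₀ → PowerSeries.coeff n W.det = 0)
      ∧ PowerSeries.coeff d₀ W.det = ∏ i : Fin k, ∏ j ∈ Finset.Ioi i, ((μ j - μ i : ℕ) : K)
      ∧ (∏ i : Fin k, ∏ j ∈ Finset.Ioi i, ((μ j - μ i : ℕ) : K)) ≠ 0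
      ∧ W.det.order = (d₀ : ℕ) := by
  rintro W hW d₀ rfl
  have hdvd : ∀ i j : Fin k, X ^ (μ i - j) ∣ W i j := fun i j =>
    hW ▸ X_pow_tsub_dvd_iterate_derivative (dvd_mul_right _ _) j
  have hsum : ∑ j : Fin k, (j : ℕ) = k * (k - 1) / 2 := by
    rw [Fin.sum_univ_eq_sum_range (·) k, sum_range_id]
  have hle : ∑ j : Fin k, (j : ℕ) ≤ ∑ i, μ i := sum_le_sum fun i _ => Fin.val_le_of_strictMono hμ i
  rw [← hsum]
  have hlead : coeff (∑ i, μ i - ∑ j : Fin k, (j : ℕ)) W.det =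
      ∏ i : Fin k, ∏ j ∈ Ioi i, ((μ j - μ i : ℕ) : K) := by
    rw [coeff_sum_tsub_sum_det_of_X_pow_tsub_dvd W μ (fun j : Fin k => (j : ℕ)) hdvd hle]
    have hleading : (Matrix.of fun i j : Fin k =>
        if (j : ℕ) ≤ μ i then coeff (μ i - j) (W i j) else 0) =
          Matrix.of fun i j : Fin k => ((μ i).descFactorial j : K) := by
      ext i j
      simp only [hW, Matrix.of_apply]
      split_ifs with h
      · rw [coeff_tsub_iterate_derivative_X_pow_mul _ h, hP, mul_one]
      · rw [Nat.descFactorial_eq_zero_iff_lt.mpr (not_le.mp h), Nat.cast_zero]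
    rw [hleading, Matrix.det_of_descFactorial]
    exact prod_congr rfl fun i _ => prod_congr rfl fun j hj =>
      (Nat.cast_sub (hμ (mem_Ioi.mp hj)).le).symm
  have hne : (∏ i : Fin k, ∏ j ∈ Ioi i, ((μ j - μ i : ℕ) : K)) ≠ 0 :=
    prod_ne_zero_iff.mpr fun i _ => prod_ne_zero_iff.mpr fun j hj =>
      Nat.cast_ne_zero.mpr (Nat.sub_ne_zero_of_lt (hμ (mem_Ioi.mp hj)))
  have hlow := X_pow_dvd_iff.mp (X_pow_sum_tsub_sum_dvd_det W μ (fun j : Fin k => (j : ℕ)) hdvd)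
  exact ⟨hlow, hlead, hne, order_eq_nat.mpr ⟨hlead ▸ hne, hlow⟩⟩

/-- Wronskian-type statement: for power series `Pᵢ` with constant coefficient `1` and strictly
increasing natural exponents `μ₁ < ⋯ < μ_k`, the determinant of the matrix
`W i j = (d/dX)^j (X^{μ i} * P i)` (for `i, j ∈ Fin k`) has order
`d₀ = (∑ μ i) - k(k-1)/2`, with leading coefficient the Vandermonde product
`∏_{i<j} (μ j - μ i) ≠ 0`. -/
theorem stmt8 {K : Type*} [Field K] [CharZero K] (k : ℕ) (hk : 1 ≤ k)
    (μ : Fin k → ℕ) (hμ : StrictMono μ)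
    (P : Fin k → PowerSeries K)
    (hP : ∀ i, PowerSeries.constantCoeff (P i) = 1) :
    ∀ W : Matrix (Fin k) (Fin k) (PowerSeries K),
      (W = fun (i j : Fin k) => (⇑(PowerSeries.derivative K))^[(j : ℕ)] (PowerSeries.X ^ μ i * P i)) →
      ∀ d₀ : ℕ, d₀ = (∑ i, μ i) - k * (k - 1) / 2 →
      (∀ n : ℕ, n < d₀ → PowerSeries.coeff n W.det = 0)
      ∧ PowerSeries.coeff d₀ W.det = ∏ i : Fin k, ∏ j ∈ Finset.Ioi i, ((μ j - μ i : ℕ) : K)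
      ∧ (∏ i : Fin k, ∏ j ∈ Finset.Ioi i, ((μ j - μ i : ℕ) : K)) ≠ 0
      ∧ W.det.order = (d₀ : ℕ) :=
  stmt8_general k μ hμ P hP
end

section
/- Let K be a field of characteristic zero, let k ≥ 1, let μ₁ < μ₂ < ⋯ < μ_k be natural numbers, and let P₁, …, P_k ∈ K[[X]] be formal power series each with constant coefficient 1. Let D denote the operator D(f) := X·(d/dX)(f) on K[[X]], and let M be the k × k matrix over K[[X]] with entries M_{i,j} := D^{j−1}(X^{μ_i}P_i) for 1 ≤ i, j ≤ k. Then the coefficient of X^n in det M vanishes for all n < μ₁ + ⋯ + μ_k, and the coefficient of X^{μ₁+⋯+μ_k} in det M equals the Vandermonde product ∏_{1≤i<j≤k}(μ_j − μ_i)·1_K, which is nonzero; in particular the order of det M equals μ₁ + ⋯ + μ_k. -/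
/-!
Since `D` acts on `X ^ n` as multiplication by `n`, every entry of row `i` of `M` is divisible
by `X ^ μᵢ`. Pulling these factors out of the rows gives `det M = X ^ (∑ μᵢ) * det N`, and the
constant term of `det N` is the determinant of the leading coefficients
`coeff μᵢ (D^j (X ^ μᵢ * Pᵢ)) = μᵢ ^ j`, a Vandermonde determinant.
-/

open PowerSeries Finset

namespace PowerSeries

variable {R : Type*}

theorem coeff_iterate_X_mul_derivative [CommSemiring R] (j n : ℕ) (f : R⟦X⟧) :
    coeff n ((fun g : R⟦X⟧ => X * derivative R g)^[j] f) = (n : R) ^ j * coeff n f := by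
  induction j generalizing f with
  | zero => simp
  | succ j ih =>
    rw [Function.iterate_succ_apply, ih]
    cases n with
    | zero => simp
    | succ n =>
      rw [coeff_succ_X_mul, coeff_derivative]
      push_cast
      ring

theorem X_pow_dvd_iterate_X_mul_derivative [CommSemiring R] {m : ℕ} {f : R⟦X⟧}
    (hf : X ^ m ∣ f) (j : ℕ) : X ^ m ∣ (fun g : R⟦X⟧ => X * derivative R g)^[j] f := by
  rw [X_pow_dvd_iff] at hf ⊢
  intro n hn
  rw [coeff_iterate_X_mul_derivative, hf n hn, mul_zero]

variable [CommRing R] {ι : Type*} [Fintype ι] [DecidableEq ι]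

theorem exists_det_eq_X_pow_sum_mul_det {M : Matrix ι ι R⟦X⟧} {μ : ι → ℕ}
    (hM : ∀ i j, X ^ μ i ∣ M i j) :
    ∃ N : Matrix ι ι R⟦X⟧, M.det = X ^ (∑ i, μ i) * N.det ∧
      ∀ i j, constantCoeff (N i j) = coeff (μ i) (M i j) := by
  choose N hN using hM
  refine ⟨Matrix.of N, ?_, fun i j => ?_⟩
  · rw [← prod_pow_eq_pow_sum, ← Matrix.det_mul_column]
    exact congrArg Matrix.det (Matrix.ext hN)
  · rw [hN, coeff_X_pow_mul', if_pos le_rfl, Nat.sub_self, coeff_zero_eq_constantCoeff]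
    rfl

theorem coeff_det_eq_zero_of_X_pow_dvd {M : Matrix ι ι R⟦X⟧} {μ : ι → ℕ}
    (hM : ∀ i j, X ^ μ i ∣ M i j) {n : ℕ} (hn : n < ∑ i, μ i) : coeff n M.det = 0 := by
  obtain ⟨N, hdet, -⟩ := exists_det_eq_X_pow_sum_mul_det hM
  rw [hdet, coeff_X_pow_mul', if_neg hn.not_ge]

theorem coeff_sum_det_of_X_pow_dvd {M : Matrix ι ι R⟦X⟧} {μ : ι → ℕ}
    (hM : ∀ i j, X ^ μ i ∣ M i j) :
    coeff (∑ i, μ i) M.det = (Matrix.of fun i j => coeff (μ i) (M i j)).det := by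
  obtain ⟨N, hdet, hN⟩ := exists_det_eq_X_pow_sum_mul_det hM
  rw [hdet, coeff_X_pow_mul', if_pos le_rfl, Nat.sub_self, coeff_zero_eq_constantCoeff,
    RingHom.map_det]
  exact congrArg Matrix.det (Matrix.ext hN)

end PowerSeries

theorem stmt9_general {K : Type*} [Field K] [CharZero K] (k : ℕ)
    (μ : Fin k → ℕ) (hμ : StrictMono μ)
    (P : Fin k → PowerSeries K)
    (hP : ∀ i, PowerSeries.constantCoeff (P i) = 1) :
    ∀ M : Matrix (Fin k) (Fin k) (PowerSeries K),
      (M = fun (i j : Fin k) =>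
        (fun f : PowerSeries K => PowerSeries.X * PowerSeries.derivative K f)^[(j : ℕ)]
          (PowerSeries.X ^ μ i * P i)) →
      (∀ n : ℕ, n < ∑ i, μ i → PowerSeries.coeff n M.det = 0)
      ∧ PowerSeries.coeff (∑ i, μ i) M.det
          = ∏ i : Fin k, ∏ j ∈ Finset.Ioi i, ((μ j - μ i : ℕ) : K)
      ∧ (∏ i : Fin k, ∏ j ∈ Finset.Ioi i, ((μ j - μ i : ℕ) : K)) ≠ 0
      ∧ M.det.order = ((∑ i, μ i : ℕ) : ℕ∞) := by
  intro M hM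
  have hentry : ∀ i j, M i j =
      (fun f : K⟦X⟧ => X * derivative K f)^[(j : ℕ)] (X ^ μ i * P i) := fun i j => by
    rw [hM]
  have hdvd : ∀ i j, X ^ μ i ∣ M i j := fun i j => hentry i j ▸
    X_pow_dvd_iterate_X_mul_derivative (dvd_mul_right (X ^ μ i) (P i)) j
  have hlead : (Matrix.of fun i j => coeff (μ i) (M i j)) =
      Matrix.vandermonde fun i => (μ i : K) := by
    ext i j
    rw [Matrix.of_apply, hentry, coeff_iterate_X_mul_derivative, coeff_X_pow_mul', if_pos le_rfl,
      Nat.sub_self, coeff_zero_eq_constantCoeff, hP, mul_one, Matrix.vandermonde_apply]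
  have hcoeff : coeff (∑ i, μ i) M.det = ∏ i : Fin k, ∏ j ∈ Ioi i, ((μ j - μ i : ℕ) : K) := by
    rw [coeff_sum_det_of_X_pow_dvd hdvd, hlead, Matrix.det_vandermonde]
    exact prod_congr rfl fun i _ => prod_congr rfl fun j hj =>
      (Nat.cast_sub (hμ (mem_Ioi.1 hj)).le).symm
  have hne : ∏ i : Fin k, ∏ j ∈ Ioi i, ((μ j - μ i : ℕ) : K) ≠ 0 :=
    prod_ne_zero_iff.2 fun i _ => prod_ne_zero_iff.2 fun j hj =>
      Nat.cast_ne_zero.2 (Nat.sub_ne_zero_of_lt (hμ (mem_Ioi.1 hj)))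
  have hlow : ∀ n < ∑ i, μ i, coeff n M.det = 0 := fun n hn =>
    coeff_det_eq_zero_of_X_pow_dvd hdvd hn
  exact ⟨hlow, hcoeff, hne, order_eq_nat.2 ⟨hcoeff ▸ hne, hlow⟩⟩

/-- For power series `Pᵢ` with constant coefficient `1` and strictly increasing natural
exponents `μ₁ < ⋯ < μ_k`, the determinant of the matrix `M i j = D^j (X^{μ i} * P i)`
(for `i, j ∈ Fin k`), where `D = X·d/dX`, has order `∑ μ i`, with leading coefficient the
Vandermonde product `∏_{i<j} (μ j - μ i) ≠ 0`. -/
theorem stmt9 {K : Type*} [Field K] [CharZero K] (k : ℕ) (hk : 1 ≤ k)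
    (μ : Fin k → ℕ) (hμ : StrictMono μ)
    (P : Fin k → PowerSeries K)
    (hP : ∀ i, PowerSeries.constantCoeff (P i) = 1) :
    ∀ M : Matrix (Fin k) (Fin k) (PowerSeries K),
      (M = fun (i j : Fin k) =>
        (fun f : PowerSeries K => PowerSeries.X * PowerSeries.derivative K f)^[(j : ℕ)]
          (PowerSeries.X ^ μ i * P i)) →
      (∀ n : ℕ, n < ∑ i, μ i → PowerSeries.coeff n M.det = 0)
      ∧ PowerSeries.coeff (∑ i, μ i) M.det
          = ∏ i : Fin k, ∏ j ∈ Finset.Ioi i, ((μ j - μ i : ℕ) : K)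
      ∧ (∏ i : Fin k, ∏ j ∈ Finset.Ioi i, ((μ j - μ i : ℕ) : K)) ≠ 0
      ∧ M.det.order = ((∑ i, μ i : ℕ) : ℕ∞) :=
  stmt9_general k μ hμ P hP
end
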